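/- With a = 1/4, b = 3/8, c = 1/4, d = 3/4, the six vectors x₁ = (a,b,b,0), x₂ = (a,−b,b,0), x₃ = (a,b,−b,0), x₄ = (a,−b,−b,0), x₅ = (c,0,0,d), x₆ = (c,0,0,−d) in ℓ₁⁴, with functionals x₁* = (1,1,1,0), x₂* = (1,−1,1,0), x₃* = (1,1,−1,0), x₄* = (1,−1,−1,0), x₅* = (1,0,0,1), x₆* = (1,0,0,−1), form a FUNTF of length 6 for ℓ₁⁴: ‖x_j‖₁ = ‖x_j*‖_∞ = x_j*(x_j) = 1 for all j and Σ_{j=1}^6 x_j* ⊗ x_j = (3/2)I. -/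

import Mathlib

open scoped BigOperators

/-- The duality pairing between `ℓ_∞⁴` and `ℓ₁⁴`. -/
noncomputable def pair4 (f : PiLp ⊤ (fun _ : Fin 4 => ℝ))
    (v : PiLp 1 (fun _ : Fin 4 => ℝ)) : ℝ :=
  ∑ i, (WithLp.equiv ⊤ (Fin 4 → ℝ) f) i * (WithLp.equiv 1 (Fin 4 → ℝ) v) i

noncomputable def xv4 : Fin 6 → PiLp 1 (fun _ : Fin 4 => ℝ) := fun j =>
  (WithLp.equiv 1 (Fin 4 → ℝ)).symm
    (![![1/4, 3/8, 3/8, 0],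
       ![1/4, -(3/8), 3/8, 0],
       ![1/4, 3/8, -(3/8), 0],
       ![1/4, -(3/8), -(3/8), 0],
       ![1/4, 0, 0, 3/4],
       ![1/4, 0, 0, -(3/4)]] j)

noncomputable def xf4 : Fin 6 → PiLp ⊤ (fun _ : Fin 4 => ℝ) := fun j =>
  (WithLp.equiv ⊤ (Fin 4 → ℝ)).symm
    (![![1, 1, 1, 0],
       ![1, -1, 1, 0],
       ![1, 1, -1, 0],
       ![1, -1, -1, 0],
       ![1, 0, 0, 1],
       ![1, 0, 0, -1]] j)

@[simp]
lemma cons_val_five' {α : Type*} {m : ℕ} (x : α) (u : Fin m.succ.succ.succ.succ.succ → α) :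
    Matrix.vecCons x u 5 =
      Matrix.vecHead (Matrix.vecTail (Matrix.vecTail (Matrix.vecTail (Matrix.vecTail u)))) :=
  rfl

/-- The explicit six vectors form a FUNTF of length 6 for `ℓ₁⁴`. -/
theorem funtf_length_six_ell1_four :
    (∀ j, ‖xv4 j‖ = 1) ∧ (∀ j, ‖xf4 j‖ = 1) ∧ (∀ j, pair4 (xf4 j) (xv4 j) = 1) ∧
    (∀ v : PiLp 1 (fun _ : Fin 4 => ℝ),
      ∑ j, pair4 (xf4 j) v • xv4 j = (3/2 : ℝ) • v) := by
  refine ⟨?_, ?_, ?_, ?_⟩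
  · intro j
    rw [PiLp.norm_eq_sum (by norm_num)]
    fin_cases j <;> simp [xv4, Fin.sum_univ_four] <;> norm_num [abs]
  · intro j
    rw [PiLp.norm_eq_ciSup]
    refine le_antisymm (ciSup_le fun i => ?_)
      ((le_ciSup (Set.Finite.bddAbove (Set.finite_range _)) (0 : Fin 4)).trans_eq' ?_)
    · fin_cases j <;> fin_cases i <;> simp [xf4]
    · fin_cases j <;> simp [xf4]
  · intro j
    fin_cases j <;> simp [pair4, xf4, xv4, Fin.sum_univ_four] <;> norm_num
  · intro v
    ext i
    simp only [Fin.sum_univ_six, pair4, xf4, xv4, Fin.sum_univ_four, PiLp.add_apply,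
      PiLp.smul_apply, WithLp.equiv_symm_apply, PiLp.toLp_apply, WithLp.equiv_apply, smul_eq_mul]
    fin_cases i <;> simp [Matrix.vecHead, Matrix.vecTail] <;> ring
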